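/- arXiv:1604.08059 — 6 statements merged into one kernel-verified Lean document; each statement's English description precedes it below -/
import Mathlib

section
/- Let K = u/v be a shift-reduced rational function in F(y) with u, v ∈ F[y] coprime, and let p be an irreducible polynomial of positive degree. If some shift σ_y^k(p) with k ≥ 0 divides u, then no shift σ_y^ℓ(p) (ℓ ∈ ℤ) divides v; moreover, setting m = 1 + max{ i ≥ 0 : σ_y^i(p) divides u }, the polynomial σ_y^m(p) is strongly prime with K. -/
open Polynomial

/-- `p` is strongly prime with `K = u/v`: `gcd(p, σ_y^{-i}(u)) = gcd(p, σ_y^{i}(v)) = 1`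
for all `i ≥ 0`. -/
def StronglyPrime {F : Type*} [Field F] (p u v : F[X]) : Prop :=
  ∀ i : ℕ, IsCoprime p (u.comp (X - Polynomial.C (i : F))) ∧
    IsCoprime p (v.comp (X + Polynomial.C (i : F)))

lemma shift_comp_shift {F : Type*} [Field F] (f : F[X]) (a b : F) :
    (f.comp (X + C a)).comp (X + C b) = f.comp (X + C (a + b)) := by
  rw [Polynomial.comp_assoc, add_comp, X_comp, C_comp, map_add]
  ring_nf

lemma shift_dvd_iff {F : Type*} [Field F] (t : F) (f g : F[X]) :
    f ∣ g ↔ f.comp (X + C t) ∣ g.comp (X + C t) := by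
  rw [← map_dvd_iff (algEquivAevalXAddC t).toMulEquiv]
  simp [algEquivAevalXAddC, comp_eq_aeval]

lemma shift_irreducible {F : Type*} [Field F] (t : F) (f : F[X]) (h : Irreducible f) :
    Irreducible (f.comp (X + C t)) := by
  have := (MulEquiv.irreducible_iff (algEquivAevalXAddC t).toMulEquiv).mpr h
  simpa [algEquivAevalXAddC, comp_eq_aeval] using this

/-- Let `K = u/v` be shift-reduced and `p` irreducible of positive degree.
If some shift `σ_y^k(p)` with `k ≥ 0` divides `u`, then no integer shift of `p`
divides `v`; moreover `σ_y^{N+1}(p)`, where `N = max{ i ≥ 0 : σ_y^i(p) ∣ u }`,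
is strongly prime with `K`. -/
theorem strongly_prime_shift_above_numerator {F : Type*} [Field F] [CharZero F]
    (u v p : F[X]) (huv : IsCoprime u v)
    (hsr : ∀ k : ℤ, IsCoprime u (v.comp (X + Polynomial.C (k : F))))
    (hpi : Irreducible p) (hdeg : 0 < p.natDegree)
    (k : ℕ) (hk : p.comp (X + Polynomial.C (k : F)) ∣ u) :
    (∀ ℓ : ℤ, ¬ p.comp (X + Polynomial.C (ℓ : F)) ∣ v) ∧
    (∀ N : ℕ, p.comp (X + Polynomial.C (N : F)) ∣ u →
      (∀ i : ℕ, N < i → ¬ p.comp (X + Polynomial.C (i : F)) ∣ u) →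
      StronglyPrime (p.comp (X + Polynomial.C ((N : F) + 1))) u v) := by
  have hnotunit : ∀ t : F, ¬ IsUnit (p.comp (X + C t)) := by
    intro t
    apply Polynomial.not_isUnit_of_natDegree_pos
    rwa [Polynomial.natDegree_comp, Polynomial.natDegree_X_add_C, mul_one]
  have key1 : ∀ ℓ : ℤ, ¬ p.comp (X + Polynomial.C (ℓ : F)) ∣ v := by
    intro ℓ hdvd
    have h2 : p.comp (X + C ((k : F))) ∣ v.comp (X + C (((k : ℤ) - ℓ : ℤ) : F)) := by
      have := (shift_dvd_iff (((k : ℤ) - ℓ : ℤ) : F) _ _).mp hdvd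
      rwa [shift_comp_shift, show (ℓ : F) + (((k : ℤ) - ℓ : ℤ) : F) = (k : F) by push_cast; ring]
        at this
    exact hnotunit (k : F) (((hsr ((k : ℤ) - ℓ)).isUnit_of_dvd' hk h2))
  refine ⟨key1, fun N hN hmax => ?_⟩
  have hqi : Irreducible (p.comp (X + C ((N : F) + 1))) := shift_irreducible _ _ hpi
  intro i
  constructor
  · rw [hqi.coprime_iff_not_dvd]
    intro hdvd
    have h2 : p.comp (X + C (((N + 1 + i : ℕ) : F))) ∣ u := by
      have := (shift_dvd_iff ((i : F)) _ _).mp hdvd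
      rw [shift_comp_shift] at this
      rw [show ((N + 1 + i : ℕ) : F) = (N : F) + 1 + (i : F) by push_cast; ring]
      refine dvd_trans (dvd_of_eq ?_) (this.trans (dvd_of_eq ?_))
      · rfl
      · rw [Polynomial.comp_assoc]
        congr 1
        simp [sub_comp, sub_add_cancel]
    exact hmax (N + 1 + i) (by omega) h2
  · rw [hqi.coprime_iff_not_dvd]
    intro hdvd
    have h2 : p.comp (X + C ((((N : ℤ) + 1 - i : ℤ)) : F)) ∣ v := by
      have := (shift_dvd_iff ((-(i : F))) _ _).mp hdvd
      rw [shift_comp_shift] at this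
      rw [show ((((N : ℤ) + 1 - i : ℤ)) : F) = (N : F) + 1 + -(i : F) by push_cast; ring]
      refine this.trans (dvd_of_eq ?_)
      rw [Polynomial.comp_assoc]
      congr 1
      simp [add_comp, sub_eq_add_neg]
    exact key1 _ h2
end

section
/- Uniqueness of significant denominators up to shift-relation: Let K = u/v ∈ F(y) be shift-reduced. Suppose r₁ = a₁/b₁ + q₁/v and r₂ = a₂/b₂ + q₂/v are two residual forms of the same rational function f w.r.t. K, i.e., there exist g₁, g₂ ∈ F(y) with f = K·σ_y(g_i) − g_i + r_i, where deg a_i < deg b_i, gcd(a_i, b_i) = 1, b_i is shift-free and strongly prime with K, and q_i ∈ F[y]. Then b₁ and b₂ are shift-related: every monic irreducible factor of b₁ of positive degree with multiplicity α has a unique shift-equivalent monic irreducible factor of b₂ with multiplicity α, and vice versa. -/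
/-!
Put `w = g₂ - g₁`, so that `K σ(w) - w = a₁/b₁ - a₂/b₂ + (q₁ - q₂)/v`. Fix an irreducible `p`
with `pⁿ ∣ b₁` and write `P_m(y) = p(y + m)`. If no `P_mⁿ` divides `b₂`, compare pole orders
at the `P_m`, using that `σ` moves a pole of `w` at `P_{m-1}` to one of `σ w` at `P_m`. At `P₀`
the pole of `a₁/b₁` survives, so `w` has a pole of order `≥ n` at `P₀` or at `P_{-1}`. Strong
primality gives `P_m ∤ u` for `m ≥ 0` and `P_m ∤ v` for `m ≤ 0`, and shift-freeness gives
`P_m ∤ b₁` for `m ≠ 0`; hence such a pole propagates to all `P_m` with `m ≥ 0`, resp. `m < 0`,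
and `w` would have infinitely many poles. So some shift `P_mⁿ` divides `b₂`; run both ways,
and since a shift-free polynomial is divisible by at most one shift of `p`, this matches the
irreducible factors of `b₁` and `b₂` with their multiplicities.
-/

open Polynomial

/-- `p` is shift-equivalent to `q`: `p(y) = q(y+m)` for some integer `m`. -/
def ShiftEquiv {F : Type*} [Field F] (p q : F[X]) : Prop :=
  ∃ m : ℤ, p = q.comp (X + Polynomial.C (m : F))

/-- A nonzero polynomial is shift-free if no two of its roots (in an algebraic
closure) differ by an integer unless they are equal. -/
def ShiftFree {F : Type*} [Field F] (p : F[X]) : Prop :=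
  p ≠ 0 ∧ ∀ r ∈ p.aroots (AlgebraicClosure F), ∀ s ∈ p.aroots (AlgebraicClosure F),
    (∃ m : ℤ, r - s = (m : AlgebraicClosure F)) → r = s

/-- Two shift-free polynomials are shift-related: monic irreducible factors
correspond bijectively up to integer shifts, preserving multiplicities. -/
def ShiftRelated {F : Type*} [Field F] (p q : F[X]) : Prop :=
  (∀ f : F[X], f.Monic → Irreducible f → f ∣ p →
    ∃! g : F[X], g.Monic ∧ Irreducible g ∧ g ∣ q ∧
      (∀ n : ℕ, f ^ n ∣ p ↔ g ^ n ∣ q) ∧ ShiftEquiv f g) ∧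
  (∀ g : F[X], g.Monic → Irreducible g → g ∣ q →
    ∃! f : F[X], f.Monic ∧ Irreducible f ∧ f ∣ p ∧
      (∀ n : ℕ, g ^ n ∣ q ↔ f ^ n ∣ p) ∧ ShiftEquiv g f)

open IsDedekindDomain WithZero

namespace Valuation

variable {R Γ₀ : Type*} [Ring R] [LinearOrderedCommMonoidWithZero Γ₀] (ν : Valuation R Γ₀)
  {k s w r : R} {γ : Γ₀}

theorem le_map_right_of_mul_sub_eq (h : k * s - w = r) (hk : 1 ≤ ν k) (hr : ν r < ν k * γ)
    (hs : γ ≤ ν s) : γ ≤ ν w := by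
  have hks : ν r < ν (k * s) := hr.trans_le (by rw [map_mul]; exact mul_le_mul_right hs _)
  rw [show w = k * s - r by rw [← h, sub_sub_cancel], ν.map_sub_eq_of_lt_left hks, map_mul]
  calc γ = 1 * γ := (one_mul γ).symm
    _ ≤ ν k * ν s := mul_le_mul' hk hs

theorem le_map_left_of_mul_sub_eq (h : k * s - w = r) (hk : ν k ≤ 1) (hr : ν r < γ)
    (hw : γ ≤ ν w) : γ ≤ ν s := by
  have hks : ν (k * s) = ν w := by
    rw [show k * s = w + r by rw [← h, add_sub_cancel], ν.map_add_eq_of_lt_left (hr.trans_le hw)]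
  calc γ ≤ ν w := hw
    _ = ν k * ν s := by rw [← hks, map_mul]
    _ ≤ ν s := mul_le_of_le_one_left' hk

theorem le_map_or_le_map_of_mul_sub_eq (h : k * s - w = r) (hk : ν k ≤ 1) (hr : γ ≤ ν r) :
    γ ≤ ν s ∨ γ ≤ ν w := by
  have hmax : γ ≤ max (ν (k * s)) (ν w) := hr.trans (h ▸ ν.map_sub (k * s) w)
  rw [map_mul] at hmax
  exact (le_max_iff.1 hmax).imp_left fun h' => h'.trans (mul_le_of_le_one_left' hk)

end Valuation

theorem Set.infinite_of_propagates_away_from_zero {S : Set ℤ}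
    (hpos : ∀ m : ℤ, 0 < m → m - 1 ∈ S → m ∈ S) (hneg : ∀ m : ℤ, m < 0 → m ∈ S → m - 1 ∈ S)
    (hS : -1 ∈ S ∨ 0 ∈ S) : S.Infinite := by
  rcases hS with h | h
  · have hmem : ∀ k : ℕ, -(k : ℤ) - 1 ∈ S := by
      intro k
      induction k with
      | zero => simpa using h
      | succ k ih =>
        convert hneg _ (by omega) ih using 1
        push_cast
        ring
    exact Set.infinite_of_injective_forall_mem (fun a b hab => by simpa using hab) hmem
  · have hmem : ∀ k : ℕ, (k : ℤ) ∈ S := by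
      intro k
      induction k with
      | zero => simpa using h
      | succ k ih => exact_mod_cast hpos (k + 1) (by omega) (by simpa using ih)
    exact Set.infinite_of_injective_forall_mem Nat.cast_injective hmem

namespace Polynomial

variable {F : Type*} [Field F] {p q : F[X]}

theorem comp_X_add_C_comp_X_add_C (p : F[X]) (a b : F) :
    (p.comp (X + C a)).comp (X + C b) = p.comp (X + C (a + b)) := by
  rw [comp_assoc, add_comp, X_comp, C_comp, add_assoc, ← C_add, add_comm b]

theorem comp_X_add_C_comp_X_add_C_neg (p : F[X]) (a : F) :
    (p.comp (X + C a)).comp (X + C (-a)) = p := by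
  rw [comp_X_add_C_comp_X_add_C, add_neg_cancel, C_0, add_zero, comp_X]

theorem algEquivAevalXAddC_apply_eq_comp (a : F) (p : F[X]) :
    algEquivAevalXAddC a p = p.comp (X + C a) := by
  simp [comp_eq_aeval]

theorem _root_.Irreducible.comp_X_add_C (hp : Irreducible p) (a : F) :
    Irreducible (p.comp (X + C a)) := by
  simpa only [algEquivAevalXAddC_apply_eq_comp] using hp.map (algEquivAevalXAddC a)

theorem comp_X_add_C_dvd_comp_X_add_C_iff (a : F) :
    p.comp (X + C a) ∣ q.comp (X + C a) ↔ p ∣ q := by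
  simp only [← algEquivAevalXAddC_apply_eq_comp, map_dvd_iff]

theorem _root_.IsCoprime.comp_X_add_C (h : IsCoprime p q) (a : F) :
    IsCoprime (p.comp (X + C a)) (q.comp (X + C a)) := by
  obtain ⟨x, y, hxy⟩ := h
  exact ⟨x.comp _, y.comp _, by rw [← mul_comp, ← mul_comp, ← add_comp, hxy, one_comp]⟩

theorem sub_mem_aroots_of_comp_X_add_C_dvd {E : Type*} [Field E] [Algebra F E] {b : F[X]}
    (hb : b ≠ 0) {r : E} (hr : aeval r p = 0) {a : F} (h : p.comp (X + C a) ∣ b) :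
    r - algebraMap F E a ∈ b.aroots E := by
  obtain ⟨q, rfl⟩ := h
  exact mem_aroots.2 ⟨hb, by simp [aeval_comp, hr]⟩

theorem _root_.Irreducible.exists_aeval_eq_zero (hp : Irreducible p) :
    ∃ r : AlgebraicClosure F, aeval r p = 0 :=
  IsAlgClosed.exists_aeval_eq_zero _ p (degree_pos_of_irreducible hp).ne'

theorem finite_setOf_comp_X_add_C_dvd [CharZero F] (hp : Irreducible p) {d : F[X]} (hd : d ≠ 0) :
    {m : ℤ | p.comp (X + C (m : F)) ∣ d}.Finite := by
  classical
  obtain ⟨r, hr⟩ := hp.exists_aeval_eq_zero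
  refine ((d.aroots _).toFinset.finite_toSet.preimage (f := fun m : ℤ => r - m)
    (fun m _ n _ h => by simpa using h)).subset fun m hm => ?_
  simpa using sub_mem_aroots_of_comp_X_add_C_dvd hd hr hm

end Polynomial

theorem ShiftFree.eq_of_comp_X_add_C_dvd {F : Type*} [Field F] [CharZero F] {b p : F[X]}
    (hb : ShiftFree b) (hp : Irreducible p) {m n : ℤ} (hm : p.comp (X + C (m : F)) ∣ b)
    (hn : p.comp (X + C (n : F)) ∣ b) : m = n := by
  obtain ⟨r, hr⟩ := hp.exists_aeval_eq_zero
  have h := hb.2 _ (sub_mem_aroots_of_comp_X_add_C_dvd hb.1 hr hm) _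
    (sub_mem_aroots_of_comp_X_add_C_dvd hb.1 hr hn) ⟨n - m, by simp⟩
  exact_mod_cast (by simpa using h : (m : AlgebraicClosure F) = n)

section StronglyPrime

variable {F : Type*} [Field F] {b u v p : F[X]}

theorem StronglyPrime.not_comp_X_add_C_dvd_left (h : StronglyPrime b u v) (hp : Irreducible p)
    (hpb : p ∣ b) {m : ℤ} (hm : 0 ≤ m) : ¬ p.comp (X + C (m : F)) ∣ u := by
  lift m to ℕ using hm
  rw [Int.cast_natCast, ← dvd_comp_X_sub_C_iff]
  exact fun hpu => hp.not_isUnit ((h m).1.isUnit_of_dvd' hpb hpu)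

theorem StronglyPrime.not_comp_X_add_C_dvd_right (h : StronglyPrime b u v) (hp : Irreducible p)
    (hpb : p ∣ b) {m : ℤ} (hm : m ≤ 0) : ¬ p.comp (X + C (m : F)) ∣ v := by
  obtain ⟨k, rfl⟩ : ∃ k : ℕ, m = -k := ⟨m.natAbs, by omega⟩
  rw [Int.cast_neg, Int.cast_natCast, C_neg, ← sub_eq_add_neg, ← dvd_comp_X_add_C_iff]
  exact fun hpv => hp.not_isUnit ((h k).2.isUnit_of_dvd' hpb hpv)

end StronglyPrime

namespace Polynomial

section AdicValuation

variable {F : Type*} [Field F] {p : F[X]}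

noncomputable def heightOneSpectrumOfIrreducible (hp : Irreducible p) :
    HeightOneSpectrum F[X] where
  asIdeal := Ideal.span {p}
  isPrime := (Ideal.span_singleton_prime hp.ne_zero).mpr hp.prime
  ne_bot := by simpa using hp.ne_zero

-- Multiplicative convention: a pole of order `n` at `p` has valuation `exp n`.
noncomputable def adicValuation (hp : Irreducible p) : Valuation (RatFunc F) ℤᵐ⁰ :=
  (heightOneSpectrumOfIrreducible hp).valuation (RatFunc F)

variable (hp : Irreducible p)
include hp

theorem adicValuation_algebraMap_le_exp_neg_iff (q : F[X]) (n : ℕ) :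
    adicValuation hp (algebraMap F[X] (RatFunc F) q) ≤ exp (-(n : ℤ)) ↔ p ^ n ∣ q := by
  rw [adicValuation, HeightOneSpectrum.valuation_of_algebraMap,
    HeightOneSpectrum.intValuation_le_pow_iff_dvd]
  exact (Ideal.span_singleton_pow p n).symm ▸ Ideal.span_singleton_dvd_span_singleton_iff_dvd

theorem adicValuation_algebraMap_eq_one_iff (q : F[X]) :
    adicValuation hp (algebraMap F[X] (RatFunc F) q) = 1 ↔ ¬ p ∣ q := by
  rw [adicValuation, HeightOneSpectrum.valuation_of_algebraMap,
    HeightOneSpectrum.intValuation_eq_one_iff]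
  exact Ideal.mem_span_singleton.not

theorem adicValuation_algebraMap_le_one (q : F[X]) :
    adicValuation hp (algebraMap F[X] (RatFunc F) q) ≤ 1 :=
  HeightOneSpectrum.valuation_le_one _ q

theorem adicValuation_div_le_one {a b : F[X]} (hb : ¬ p ∣ b) :
    adicValuation hp (algebraMap F[X] (RatFunc F) a / algebraMap F[X] (RatFunc F) b) ≤ 1 := by
  rw [map_div₀, (adicValuation_algebraMap_eq_one_iff hp b).2 hb, div_one]
  exact adicValuation_algebraMap_le_one hp a

theorem one_le_adicValuation_div {a b : F[X]} (ha : ¬ p ∣ a) (hb : b ≠ 0) :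
    1 ≤ adicValuation hp (algebraMap F[X] (RatFunc F) a / algebraMap F[X] (RatFunc F) b) := by
  rw [map_div₀, (adicValuation_algebraMap_eq_one_iff hp a).2 ha, one_div]
  exact (one_le_inv₀ (zero_lt_iff.2 (by simpa using hb))).2 (adicValuation_algebraMap_le_one hp b)

theorem adicValuation_div_lt_exp {a b : F[X]} {n : ℕ} (hb : ¬ p ^ n ∣ b) :
    adicValuation hp (algebraMap F[X] (RatFunc F) a / algebraMap F[X] (RatFunc F) b) <
      exp (n : ℤ) := by
  have hlt : exp (-(n : ℤ)) < adicValuation hp (algebraMap F[X] (RatFunc F) b) :=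
    lt_of_not_ge (mt (adicValuation_algebraMap_le_exp_neg_iff hp b n).1 hb)
  rw [map_div₀]
  calc _ ≤ 1 / adicValuation hp (algebraMap F[X] (RatFunc F) b) :=
        div_le_div_of_nonneg_right (adicValuation_algebraMap_le_one hp a) zero_le
    _ < exp (n : ℤ) := by
        rw [one_div, ← inv_inv (exp (n : ℤ)), ← exp_neg]
        exact inv_strictAnti₀ (by simp) hlt

theorem exp_le_adicValuation_div {a b : F[X]} (hab : IsCoprime a b) (hb : b ≠ 0) {n : ℕ}
    (hn : 0 < n) (h : p ^ n ∣ b) :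
    exp (n : ℤ) ≤
      adicValuation hp (algebraMap F[X] (RatFunc F) a / algebraMap F[X] (RatFunc F) b) := by
  have hpa : ¬ p ∣ a := fun hpa =>
    hp.not_isUnit (hab.isUnit_of_dvd' hpa ((dvd_pow_self p hn.ne').trans h))
  have hb0 : adicValuation hp (algebraMap F[X] (RatFunc F) b) ≠ 0 := by simpa using hb
  rw [map_div₀, (adicValuation_algebraMap_eq_one_iff hp a).2 hpa, one_div,
    ← inv_inv (exp (n : ℤ)), ← exp_neg]
  exact inv_anti₀ (zero_lt_iff.2 hb0) ((adicValuation_algebraMap_le_exp_neg_iff hp b n).2 h)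

theorem exp_le_adicValuation_div_iff {a b : F[X]} (hab : IsCoprime a b) (hb : b ≠ 0) {n : ℕ}
    (hn : 0 < n) :
    exp (n : ℤ) ≤
      adicValuation hp (algebraMap F[X] (RatFunc F) a / algebraMap F[X] (RatFunc F) b) ↔
      p ^ n ∣ b :=
  ⟨fun h => not_not.1 fun h' => (adicValuation_div_lt_exp hp h').not_ge h,
    exp_le_adicValuation_div hp hab hb hn⟩

end AdicValuation

section ResidualForm

variable {F : Type*} [Field F] {P u v a₁ b₁ a₂ b₂ c : F[X]} {s w : RatFunc F} {n : ℕ}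
  (hP : Irreducible P)
  (hE : algebraMap F[X] (RatFunc F) u / algebraMap F[X] (RatFunc F) v * s - w =
    algebraMap F[X] (RatFunc F) a₁ / algebraMap F[X] (RatFunc F) b₁ -
      algebraMap F[X] (RatFunc F) a₂ / algebraMap F[X] (RatFunc F) b₂ +
      algebraMap F[X] (RatFunc F) c / algebraMap F[X] (RatFunc F) v)
  (hn : 0 < n)
include hP hE hn

theorem exp_le_adicValuation_right_of_mul_sub_eq (hu : ¬ P ∣ u) (hv : v ≠ 0)
    (hb₁ : ¬ P ∣ b₁) (hb₂ : ¬ P ^ n ∣ b₂) (hs : exp (n : ℤ) ≤ adicValuation hP s) :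
    exp (n : ℤ) ≤ adicValuation hP w := by
  have hγ : 1 < exp (n : ℤ) := by simpa [← exp_zero] using hn
  have hk := one_le_adicValuation_div hP hu hv
  refine (adicValuation hP).le_map_right_of_mul_sub_eq hE hk ?_ hs
  have hγk : exp (n : ℤ) ≤ _ * exp (n : ℤ) := le_mul_of_one_le_left' hk
  refine Valuation.map_add_lt _ (Valuation.map_sub_lt _ ?_ ?_) ?_
  · exact (adicValuation_div_le_one hP hb₁).trans_lt (hγ.trans_le hγk)
  · exact (adicValuation_div_lt_exp hP hb₂).trans_le hγk
  · refine lt_of_le_of_lt ?_ (lt_mul_of_one_lt_right (zero_lt_one.trans_le hk) hγ)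
    rw [map_div₀, map_div₀, (adicValuation_algebraMap_eq_one_iff hP u).2 hu]
    exact div_le_div_of_nonneg_right (adicValuation_algebraMap_le_one hP c) zero_le

theorem exp_le_adicValuation_left_of_mul_sub_eq (hv : ¬ P ∣ v)
    (hb₁ : ¬ P ∣ b₁) (hb₂ : ¬ P ^ n ∣ b₂) (hw : exp (n : ℤ) ≤ adicValuation hP w) :
    exp (n : ℤ) ≤ adicValuation hP s := by
  have hγ : 1 < exp (n : ℤ) := by simpa [← exp_zero] using hn
  refine (adicValuation hP).le_map_left_of_mul_sub_eq hE (adicValuation_div_le_one hP hv) ?_ hw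
  refine Valuation.map_add_lt _ (Valuation.map_sub_lt _ ?_ ?_) ?_
  · exact (adicValuation_div_le_one hP hb₁).trans_lt hγ
  · exact adicValuation_div_lt_exp hP hb₂
  · exact (adicValuation_div_le_one hP hv).trans_lt hγ

theorem exp_le_adicValuation_or_of_mul_sub_eq (hv : ¬ P ∣ v) (hab₁ : IsCoprime a₁ b₁)
    (hb₁0 : b₁ ≠ 0) (hb₁ : P ^ n ∣ b₁) (hb₂ : ¬ P ^ n ∣ b₂) :
    exp (n : ℤ) ≤ adicValuation hP s ∨ exp (n : ℤ) ≤ adicValuation hP w := by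
  have hγ : 1 < exp (n : ℤ) := by simpa [← exp_zero] using hn
  have hA := exp_le_adicValuation_div hP hab₁ hb₁0 hn hb₁
  refine (adicValuation hP).le_map_or_le_map_of_mul_sub_eq hE (adicValuation_div_le_one hP hv) ?_
  have hAB := (adicValuation hP).map_sub_eq_of_lt_left
    ((adicValuation_div_lt_exp hP hb₂ (a := a₂)).trans_le hA)
  rw [(adicValuation hP).map_add_eq_of_lt_left, hAB]
  · exact hA
  · rw [hAB]
    exact (adicValuation_div_le_one hP hv).trans_lt (hγ.trans_le hA)

end ResidualForm

end Polynomial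

theorem map_eq_num_comp_div_denom_comp {F : Type*} [Field F]
    (σ : RatFunc F ≃+* RatFunc F)
    (hσ : ∀ p : F[X], σ (algebraMap F[X] (RatFunc F) p) =
      algebraMap F[X] (RatFunc F) (p.comp (X + Polynomial.C 1))) (w : RatFunc F) :
    σ w = algebraMap F[X] (RatFunc F) (w.num.comp (X + C 1)) /
      algebraMap F[X] (RatFunc F) (w.denom.comp (X + C 1)) := by
  conv_lhs => rw [← RatFunc.num_div_denom w]
  rw [map_div₀, hσ, hσ]

theorem exists_comp_X_add_C_pow_dvd_of_mul_sub_eq {F : Type*} [Field F] [CharZero F]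
    (σ : RatFunc F ≃+* RatFunc F)
    (hσ : ∀ p : F[X], σ (algebraMap F[X] (RatFunc F) p) =
      algebraMap F[X] (RatFunc F) (p.comp (X + Polynomial.C 1)))
    {u v a₁ b₁ a₂ b₂ c : F[X]} {w : RatFunc F} (hsf₁ : ShiftFree b₁)
    (hsp₁ : StronglyPrime b₁ u v) (hcop₁ : IsCoprime a₁ b₁)
    (hE : algebraMap F[X] (RatFunc F) u / algebraMap F[X] (RatFunc F) v * σ w - w =
      algebraMap F[X] (RatFunc F) a₁ / algebraMap F[X] (RatFunc F) b₁ -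
        algebraMap F[X] (RatFunc F) a₂ / algebraMap F[X] (RatFunc F) b₂ +
        algebraMap F[X] (RatFunc F) c / algebraMap F[X] (RatFunc F) v)
    {p : F[X]} (hp : Irreducible p) {n : ℕ} (hpn : p ^ n ∣ b₁) :
    ∃ m : ℤ, p.comp (X + C (m : F)) ^ n ∣ b₂ := by
  rcases n.eq_zero_or_pos with rfl | hn
  · exact ⟨0, by simp⟩
  by_contra! hb₂
  set P : ℤ → F[X] := fun m => p.comp (X + C (m : F)) with hPdef
  have hP (m : ℤ) : Irreducible (P m) := hp.comp_X_add_C _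
  have hP0 : P 0 = p := by simp [hPdef]
  have hpb : p ∣ b₁ := (dvd_pow_self p hn.ne').trans hpn
  have hb₁ (m : ℤ) (hm : m ≠ 0) : ¬ P m ∣ b₁ := fun h =>
    hm (hsf₁.eq_of_comp_X_add_C_dvd hp h (by simpa using hpb))
  have hv : v ≠ 0 := fun h => hsp₁.not_comp_X_add_C_dvd_right hp hpb le_rfl (h ▸ dvd_zero _)
  set S := {m : ℤ | P m ^ n ∣ w.denom}
  have hw (m : ℤ) : exp (n : ℤ) ≤ adicValuation (hP m) w ↔ m ∈ S := by
    conv_lhs => rw [← RatFunc.num_div_denom w]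
    exact exp_le_adicValuation_div_iff _ w.isCoprime_num_denom w.denom_ne_zero hn
  have hσw (m : ℤ) : exp (n : ℤ) ≤ adicValuation (hP m) (σ w) ↔ m - 1 ∈ S := by
    rw [map_eq_num_comp_div_denom_comp σ hσ, exp_le_adicValuation_div_iff _
      (w.isCoprime_num_denom.comp_X_add_C 1) (comp_X_add_C_ne_zero_iff.2 w.denom_ne_zero) hn]
    have hshift : P m = (P (m - 1)).comp (X + C 1) := by
      simp only [hPdef, comp_X_add_C_comp_X_add_C, Int.cast_sub, Int.cast_one, sub_add_cancel]
    rw [hshift, ← pow_comp, comp_X_add_C_dvd_comp_X_add_C_iff]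
    rfl
  have hS : S.Infinite := by
    refine Set.infinite_of_propagates_away_from_zero (fun m hm h => ?_) (fun m hm h => ?_) ?_
    · exact (hw m).1 <| exp_le_adicValuation_right_of_mul_sub_eq (hP m) hE hn
        (hsp₁.not_comp_X_add_C_dvd_left hp hpb hm.le) hv (hb₁ m hm.ne') (hb₂ m) ((hσw m).2 h)
    · exact (hσw m).1 <| exp_le_adicValuation_left_of_mul_sub_eq (hP m) hE hn
        (hsp₁.not_comp_X_add_C_dvd_right hp hpb hm.le) (hb₁ m hm.ne) (hb₂ m) ((hw m).2 h)
    · exact (exp_le_adicValuation_or_of_mul_sub_eq (hP 0) hE hn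
        (hsp₁.not_comp_X_add_C_dvd_right hp hpb le_rfl) hcop₁ hsf₁.1 (hP0 ▸ hpn)
        (hb₂ 0)).imp (hσw 0).1 (hw 0).1
  exact hS ((finite_setOf_comp_X_add_C_dvd hp w.denom_ne_zero).subset fun m hm =>
    (dvd_pow_self _ hn.ne').trans hm)

section ShiftRelated

variable {F : Type*} [Field F] [CharZero F] {b₁ b₂ : F[X]}

theorem ShiftFree.existsUnique_of_forall_exists_comp_X_add_C_pow_dvd (hb₁ : ShiftFree b₁)
    (hb₂ : ShiftFree b₂)
    (h₁₂ : ∀ p : F[X], Irreducible p → ∀ n : ℕ, p ^ n ∣ b₁ →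
      ∃ m : ℤ, p.comp (X + C (m : F)) ^ n ∣ b₂)
    (h₂₁ : ∀ p : F[X], Irreducible p → ∀ n : ℕ, p ^ n ∣ b₂ →
      ∃ m : ℤ, p.comp (X + C (m : F)) ^ n ∣ b₁)
    {f : F[X]} (hmon : f.Monic) (hf : Irreducible f) (hfb : f ∣ b₁) :
    ∃! g : F[X], g.Monic ∧ Irreducible g ∧ g ∣ b₂ ∧
      (∀ n : ℕ, f ^ n ∣ b₁ ↔ g ^ n ∣ b₂) ∧ ShiftEquiv f g := by
  obtain ⟨m₀, hm₀⟩ := h₁₂ f hf 1 (by simpa using hfb)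
  rw [pow_one] at hm₀
  have hfb' : f.comp (X + C ((0 : ℤ) : F)) ∣ b₁ := by simpa using hfb
  refine ⟨f.comp (X + C (m₀ : F)), ⟨hmon.comp_X_add_C _, hf.comp_X_add_C _, hm₀, fun n => ?_,
    -m₀, by rw [Int.cast_neg, comp_X_add_C_comp_X_add_C_neg]⟩, ?_⟩
  · rcases n.eq_zero_or_pos with rfl | hn
    · simp
    constructor
    · intro h
      obtain ⟨m, hm⟩ := h₁₂ f hf n h
      rwa [hb₂.eq_of_comp_X_add_C_dvd hf ((dvd_pow_self _ hn.ne').trans hm) hm₀] at hm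
    · intro h
      obtain ⟨m, hm⟩ := h₂₁ _ (hf.comp_X_add_C _) n h
      rw [comp_X_add_C_comp_X_add_C, ← Int.cast_add] at hm
      have hm0 := hb₁.eq_of_comp_X_add_C_dvd hf ((dvd_pow_self _ hn.ne').trans hm) hfb'
      simpa [hm0] using hm
  · rintro g ⟨-, -, hgb, -, k, hk⟩
    have hg : g = f.comp (X + C ((-k : ℤ) : F)) := by
      rw [hk, Int.cast_neg, comp_X_add_C_comp_X_add_C_neg]
    rw [hg] at hgb ⊢
    rw [hb₂.eq_of_comp_X_add_C_dvd hf hgb hm₀]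

theorem ShiftFree.shiftRelated_of_forall_exists_comp_X_add_C_pow_dvd (hb₁ : ShiftFree b₁)
    (hb₂ : ShiftFree b₂)
    (h₁₂ : ∀ p : F[X], Irreducible p → ∀ n : ℕ, p ^ n ∣ b₁ →
      ∃ m : ℤ, p.comp (X + C (m : F)) ^ n ∣ b₂)
    (h₂₁ : ∀ p : F[X], Irreducible p → ∀ n : ℕ, p ^ n ∣ b₂ →
      ∃ m : ℤ, p.comp (X + C (m : F)) ^ n ∣ b₁) :
    ShiftRelated b₁ b₂ :=
  ⟨fun _ => hb₁.existsUnique_of_forall_exists_comp_X_add_C_pow_dvd hb₂ h₁₂ h₂₁,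
    fun _ => hb₂.existsUnique_of_forall_exists_comp_X_add_C_pow_dvd hb₁ h₂₁ h₁₂⟩

end ShiftRelated

theorem significant_denominators_shift_related_general
    (F : Type*) [Field F] [CharZero F]
    (σ : RatFunc F ≃+* RatFunc F)
    (hσ : ∀ p : F[X], σ (algebraMap F[X] (RatFunc F) p) =
      algebraMap F[X] (RatFunc F) (p.comp (X + Polynomial.C 1)))
    (u v : F[X])
    (f g₁ g₂ : RatFunc F) (a₁ b₁ q₁ a₂ b₂ q₂ : F[X])
    (hcop₁ : IsCoprime a₁ b₁)
    (hsf₁ : ShiftFree b₁) (hsp₁ : StronglyPrime b₁ u v)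
    (hcop₂ : IsCoprime a₂ b₂)
    (hsf₂ : ShiftFree b₂) (hsp₂ : StronglyPrime b₂ u v)
    (h₁ : f = (algebraMap F[X] (RatFunc F) u / algebraMap F[X] (RatFunc F) v) * σ g₁ - g₁ +
      (algebraMap F[X] (RatFunc F) a₁ / algebraMap F[X] (RatFunc F) b₁ +
        algebraMap F[X] (RatFunc F) q₁ / algebraMap F[X] (RatFunc F) v))
    (h₂ : f = (algebraMap F[X] (RatFunc F) u / algebraMap F[X] (RatFunc F) v) * σ g₂ - g₂ +
      (algebraMap F[X] (RatFunc F) a₂ / algebraMap F[X] (RatFunc F) b₂ +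
        algebraMap F[X] (RatFunc F) q₂ / algebraMap F[X] (RatFunc F) v)) :
    ShiftRelated b₁ b₂ := by
  have hE₁₂ : algebraMap F[X] (RatFunc F) u / algebraMap F[X] (RatFunc F) v * σ (g₂ - g₁) -
      (g₂ - g₁) = algebraMap F[X] (RatFunc F) a₁ / algebraMap F[X] (RatFunc F) b₁ -
        algebraMap F[X] (RatFunc F) a₂ / algebraMap F[X] (RatFunc F) b₂ +
        algebraMap F[X] (RatFunc F) (q₁ - q₂) / algebraMap F[X] (RatFunc F) v := by
    rw [map_sub, map_sub]
    linear_combination h₁ - h₂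
  have hE₂₁ : algebraMap F[X] (RatFunc F) u / algebraMap F[X] (RatFunc F) v * σ (g₁ - g₂) -
      (g₁ - g₂) = algebraMap F[X] (RatFunc F) a₂ / algebraMap F[X] (RatFunc F) b₂ -
        algebraMap F[X] (RatFunc F) a₁ / algebraMap F[X] (RatFunc F) b₁ +
        algebraMap F[X] (RatFunc F) (q₂ - q₁) / algebraMap F[X] (RatFunc F) v := by
    rw [map_sub, map_sub]
    linear_combination h₂ - h₁
  exact hsf₁.shiftRelated_of_forall_exists_comp_X_add_C_pow_dvd hsf₂
    (fun _ hp _ h => exists_comp_X_add_C_pow_dvd_of_mul_sub_eq σ hσ hsf₁ hsp₁ hcop₁ hE₁₂ hp h)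
    (fun _ hp _ h => exists_comp_X_add_C_pow_dvd_of_mul_sub_eq σ hσ hsf₂ hsp₂ hcop₂ hE₂₁ hp h)

/-- Uniqueness of significant denominators up to shift-relation: if
`r₁ = a₁/b₁ + q₁/v` and `r₂ = a₂/b₂ + q₂/v` are two residual forms of the same
rational function `f` w.r.t. the shift-reduced kernel `K = u/v`, then the
significant denominators `b₁` and `b₂` are shift-related. -/
theorem significant_denominators_shift_related
    (F : Type*) [Field F] [CharZero F]
    (σ : RatFunc F ≃+* RatFunc F)
    (hσ : ∀ p : F[X], σ (algebraMap F[X] (RatFunc F) p) =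
      algebraMap F[X] (RatFunc F) (p.comp (X + Polynomial.C 1)))
    (u v : F[X]) (hv : v ≠ 0) (huv : IsCoprime u v)
    (hsr : ∀ k : ℤ, IsCoprime u (v.comp (X + Polynomial.C (k : F))))
    (f g₁ g₂ : RatFunc F) (a₁ b₁ q₁ a₂ b₂ q₂ : F[X])
    (hdeg₁ : a₁.degree < b₁.degree) (hcop₁ : IsCoprime a₁ b₁)
    (hsf₁ : ShiftFree b₁) (hsp₁ : StronglyPrime b₁ u v)
    (hdeg₂ : a₂.degree < b₂.degree) (hcop₂ : IsCoprime a₂ b₂)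
    (hsf₂ : ShiftFree b₂) (hsp₂ : StronglyPrime b₂ u v)
    (h₁ : f = (algebraMap F[X] (RatFunc F) u / algebraMap F[X] (RatFunc F) v) * σ g₁ - g₁ +
      (algebraMap F[X] (RatFunc F) a₁ / algebraMap F[X] (RatFunc F) b₁ +
        algebraMap F[X] (RatFunc F) q₁ / algebraMap F[X] (RatFunc F) v))
    (h₂ : f = (algebraMap F[X] (RatFunc F) u / algebraMap F[X] (RatFunc F) v) * σ g₂ - g₂ +
      (algebraMap F[X] (RatFunc F) a₂ / algebraMap F[X] (RatFunc F) b₂ +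
        algebraMap F[X] (RatFunc F) q₂ / algebraMap F[X] (RatFunc F) v)) :
    ShiftRelated b₁ b₂ :=
  significant_denominators_shift_related_general F σ hσ u v f g₁ g₂ a₁ b₁ q₁ a₂ b₂ q₂ hcop₁ hsf₁
    hsp₁ hcop₂ hsf₂ hsp₂ h₁ h₂
end

section
/- Kernel exchange at the denominator: Let (K, S) with K = u/v (u,v ∈ F[y] coprime, K shift-reduced) satisfy f = K · σ_y(S)/S for a rational function f ∈ F(y). Let p be a monic irreducible factor of v with multiplicity α > 0 and set v' = v/p^α. Then K' = u/(v'·σ_y(p)^α) is shift-reduced, and with S' = p^α·S one has f = K'·σ_y(S')/S'. -/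
open Polynomial

/-- Kernel exchange at the denominator: if `(K, S)` with `K = u/v` shift-reduced is an
RNF of `f`, and `p^α` is the full power of a monic irreducible `p` in `v = v'·p^α`, then
`K' = u/(v'·σ_y(p)^α)` is shift-reduced and `(K', p^α·S)` is again an RNF of `f`. -/
theorem kernel_exchange_denominator
    (F : Type*) [Field F] [CharZero F]
    (σ : RatFunc F ≃+* RatFunc F)
    (hσ : ∀ p : F[X], σ (algebraMap F[X] (RatFunc F) p) =
      algebraMap F[X] (RatFunc F) (p.comp (X + Polynomial.C 1)))
    (u v v' p : F[X]) (α : ℕ) (hα : 0 < α)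
    (hp : p.Monic) (hpi : Irreducible p)
    (hv : v = v' * p ^ α) (hp' : ¬ p ∣ v')
    (huv : IsCoprime u v)
    (hsr : ∀ k : ℤ, IsCoprime u (v.comp (X + Polynomial.C (k : F))))
    (f S : RatFunc F) (hS : S ≠ 0)
    (hf : f = (algebraMap F[X] (RatFunc F) u / algebraMap F[X] (RatFunc F) v) * (σ S / S)) :
    (∀ k : ℤ, IsCoprime u
      ((v' * (p.comp (X + Polynomial.C (1 : F))) ^ α).comp (X + Polynomial.C (k : F)))) ∧
    f = (algebraMap F[X] (RatFunc F) u /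
          algebraMap F[X] (RatFunc F) (v' * (p.comp (X + Polynomial.C (1 : F))) ^ α)) *
        (σ (algebraMap F[X] (RatFunc F) (p ^ α) * S) /
          (algebraMap F[X] (RatFunc F) (p ^ α) * S)) := by
  have hvcomp : ∀ k : ℤ, v.comp (X + Polynomial.C (k : F)) =
      v'.comp (X + Polynomial.C (k : F)) * (p.comp (X + Polynomial.C (k : F))) ^ α := by
    intro k; rw [hv, mul_comp, pow_comp]
  constructor
  · intro k
    have h1 : IsCoprime u (v'.comp (X + Polynomial.C (k : F))) :=
      ((hvcomp k ▸ hsr k).of_mul_right_left)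
    have h2 : IsCoprime u ((p.comp (X + Polynomial.C ((k + 1 : ℤ) : F))) ^ α) :=
      ((hvcomp (k + 1) ▸ hsr (k + 1)).of_mul_right_right)
    have hcc : (p.comp (X + Polynomial.C (1 : F))).comp (X + Polynomial.C (k : F)) =
        p.comp (X + Polynomial.C ((k + 1 : ℤ) : F)) := by
      rw [comp_assoc, add_comp, X_comp, C_comp]
      congr 1
      push_cast
      rw [C_add]
      ring
    rw [mul_comp, pow_comp, hcc]
    exact h1.mul_right h2
  · have hp0 : p ≠ 0 := hp.ne_zero
    have hv'0 : v' ≠ 0 := fun h => hp' (h ▸ dvd_zero p)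
    have hσS : σ S ≠ 0 := fun h => hS (by simpa using σ.injective (h.trans (map_zero σ).symm))
    have hσp : σ (algebraMap F[X] (RatFunc F) (p ^ α)) =
        algebraMap F[X] (RatFunc F) ((p.comp (X + Polynomial.C (1 : F))) ^ α) := by
      rw [map_pow, map_pow, hσ, map_pow]
    have hAp : algebraMap F[X] (RatFunc F) p ≠ 0 := by
      simpa using (RatFunc.algebraMap_ne_zero hp0)
    have hAv' : algebraMap F[X] (RatFunc F) v' ≠ 0 := RatFunc.algebraMap_ne_zero hv'0
    have hpc0 : p.comp (X + Polynomial.C (1 : F)) ≠ 0 :=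
      (hp.comp (monic_X_add_C 1) (by rw [natDegree_X_add_C]; norm_num)).ne_zero
    have hApc : algebraMap F[X] (RatFunc F) (p.comp (X + Polynomial.C (1 : F))) ≠ 0 :=
      RatFunc.algebraMap_ne_zero hpc0
    rw [hf, hv, map_mul, map_pow, map_mul σ, map_pow σ, hσ, map_mul, map_pow]
    rw [div_mul_div_comm, div_mul_div_comm, div_eq_div_iff
      (mul_ne_zero (mul_ne_zero hAv' (pow_ne_zero _ hAp)) hS)
      (mul_ne_zero (mul_ne_zero hAv' (pow_ne_zero _ hApc)) (mul_ne_zero (pow_ne_zero _ hAp) hS))]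
    ring
end

section
/- Kernel exchange at the numerator: Let (K, S) with K = u/v (u,v ∈ F[y] coprime, K shift-reduced) satisfy f = K·σ_y(S)/S. Let p be a monic irreducible factor of u with multiplicity α > 0 and set u' = u/p^α. Then K' = (u'·σ_y^{-1}(p)^α)/v is shift-reduced, and with S' = σ_y^{-1}(p)^α·S one has f = K'·σ_y(S')/S'. -/
open Polynomial

/-- Kernel exchange at the numerator: if `(K, S)` with `K = u/v` shift-reduced is an
RNF of `f`, and `p^α` is the full power of a monic irreducible `p` in `u = u'·p^α`, then
`K' = (u'·σ_y^{-1}(p)^α)/v` is shift-reduced and `(K', σ_y^{-1}(p)^α·S)` is again an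
RNF of `f`. -/
theorem kernel_exchange_numerator
    (F : Type*) [Field F] [CharZero F]
    (σ : RatFunc F ≃+* RatFunc F)
    (hσ : ∀ p : F[X], σ (algebraMap F[X] (RatFunc F) p) =
      algebraMap F[X] (RatFunc F) (p.comp (X + Polynomial.C 1)))
    (u v u' p : F[X]) (α : ℕ) (hα : 0 < α)
    (hp : p.Monic) (hpi : Irreducible p)
    (hu : u = u' * p ^ α) (hp' : ¬ p ∣ u')
    (huv : IsCoprime u v)
    (hsr : ∀ k : ℤ, IsCoprime u (v.comp (X + Polynomial.C (k : F))))
    (f S : RatFunc F) (hS : S ≠ 0)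
    (hf : f = (algebraMap F[X] (RatFunc F) u / algebraMap F[X] (RatFunc F) v) * (σ S / S)) :
    (∀ k : ℤ, IsCoprime (u' * (p.comp (X - Polynomial.C (1 : F))) ^ α)
      (v.comp (X + Polynomial.C (k : F)))) ∧
    f = (algebraMap F[X] (RatFunc F) (u' * (p.comp (X - Polynomial.C (1 : F))) ^ α) /
          algebraMap F[X] (RatFunc F) v) *
        (σ (algebraMap F[X] (RatFunc F) ((p.comp (X - Polynomial.C (1 : F))) ^ α) * S) /
          (algebraMap F[X] (RatFunc F) ((p.comp (X - Polynomial.C (1 : F))) ^ α) * S)) := by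
  set q := p.comp (X - Polynomial.C (1:F)) with hqdef
  have hcomp : q.comp (X + Polynomial.C (1:F)) = p := by
    rw [hqdef, comp_assoc]; simp
  have cop : ∀ k : ℤ, IsCoprime (u' * q ^ α) (v.comp (X + Polynomial.C (k : F))) := by
    intro k
    have h1 : IsCoprime (u' * p ^ α) (v.comp (X + Polynomial.C (k:F))) := hu ▸ hsr k
    have hu'cop : IsCoprime u' (v.comp (X + Polynomial.C (k:F))) := h1.of_mul_left_left
    have hpcop : IsCoprime p (v.comp (X + Polynomial.C ((k+1:ℤ) : F))) :=
      (IsCoprime.pow_left_iff hα).mp ((hu ▸ hsr (k+1)).of_mul_left_right)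
    have hmap := hpcop.map (aeval (X - Polynomial.C (1:F))).toRingHom
    simp only [AlgHom.toRingHom_eq_coe, AlgHom.coe_toRingHom, ← comp_eq_aeval] at hmap
    have hrw : (v.comp (X + Polynomial.C ((k+1:ℤ) : F))).comp (X - Polynomial.C (1:F)) =
        v.comp (X + Polynomial.C (k:F)) := by
      rw [comp_assoc]
      congr 1
      push_cast
      simp [add_comp, sub_comp, map_add, map_one]
    rw [hrw] at hmap
    exact hu'cop.mul_left (hmap.pow_left)
  refine ⟨cop, ?_⟩
  have hq0 : q ≠ 0 := by
    intro h
    exact hpi.ne_zero (by rw [← hcomp, h, zero_comp])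
  set A := algebraMap F[X] (RatFunc F) with hA
  have hc0 : A (q ^ α) ≠ 0 := by
    simpa [hA, RatFunc.algebraMap_ne_zero] using pow_ne_zero α hq0
  have hQ : σ (A (q ^ α)) = A (p ^ α) := by
    rw [hA, hσ]
    congr 1
    rw [pow_comp, hcomp]
  rw [hf, hu]
  simp only [map_mul]
  rw [hQ]
  rw [div_mul_div_comm, div_mul_div_comm]
  have e1 : A u' * A (q ^ α) * (A (p ^ α) * σ S) =
      A (q ^ α) * (A u' * A (p ^ α) * σ S) := by ring
  have e2 : A v * (A (q ^ α) * S) = A (q ^ α) * (A v * S) := by ring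
  rw [e1, e2, mul_div_mul_left _ _ hc0]
end

section
/- Let K = u/v ∈ F(y) be shift-reduced with u, v ∈ F[y] coprime, and define the F-linear map φ_K : F[y] → F[y] by φ_K(p) = u·σ_y(p) − v·p. Let W_K be the F-span of the monomials y^ℓ such that ℓ is not the degree of any nonzero element of the image of φ_K. Then F[y] = im(φ_K) ⊕ W_K as F-vector spaces. -/
open Polynomial

/-- The `F`-linear map for polynomial reduction w.r.t. `K = u/v`:
`φ_K(p) = u·σ_y(p) − v·p`. -/
noncomputable def phiK {F : Type*} [Field F] (u v : F[X]) : F[X] →ₗ[F] F[X] where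
  toFun p := u * p.comp (X + Polynomial.C 1) - v * p
  map_add' p q := by simp [add_comp]; ring
  map_smul' c p := by simp [smul_comp, smul_sub, Polynomial.smul_eq_C_mul]; ring

/-- The standard complement `W_K`: the span of the monomials `y^ℓ` such that `ℓ`
is not the degree of any nonzero element of `im(φ_K)`. -/
noncomputable def WK {F : Type*} [Field F] (u v : F[X]) : Submodule F F[X] :=
  Submodule.span F
    { q | ∃ ℓ : ℕ, q = X ^ ℓ ∧
        ∀ r ∈ LinearMap.range (phiK u v), r ≠ 0 → r.natDegree ≠ ℓ }

/-- `F[y] = im(φ_K) ⊕ W_K`. -/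
theorem polynomial_reduction_direct_sum
    (F : Type*) [Field F] [CharZero F] (u v : F[X])
    (hu : u ≠ 0) (hv : v ≠ 0) (huv : IsCoprime u v) :
    IsCompl (LinearMap.range (phiK u v)) (WK u v) := by
  set M := LinearMap.range (phiK u v) with hMdef
  -- support of elements of WK avoids degrees of nonzero elements of M
  have hsupp : ∀ q ∈ WK u v, ∀ n ∈ q.support,
      ∀ r ∈ M, r ≠ 0 → r.natDegree ≠ n := by
    intro q hq
    induction hq using Submodule.span_induction with
    | mem x hx =>
      obtain ⟨ℓ, rfl, hℓ⟩ := hx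
      intro n hn
      have : n = ℓ := by
        have := Polynomial.mem_support_iff.mp hn
        rw [Polynomial.coeff_X_pow] at this
        by_contra h
        exact this (if_neg h)
      subst this
      exact hℓ
    | zero => simp
    | add a b ha hb iha ihb =>
      intro n hn
      rcases Finset.mem_union.mp (Polynomial.support_add hn) with h | h
      · exact iha n h
      · exact ihb n h
    | smul c a ha iha =>
      intro n hn
      exact iha n (Polynomial.support_smul c a hn)
  constructor
  · rw [Submodule.disjoint_def]
    intro p hpM hpW
    by_contra hp0
    exact hsupp p hpW p.natDegree (p.natDegree_mem_support_of_nonzero hp0)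
      p hpM hp0 rfl
  · rw [codisjoint_iff_le_sup]
    have key : ∀ n : ℕ, ∀ p : F[X], p.natDegree < n → p ∈ M ⊔ WK u v := by
      intro n
      induction n using Nat.strong_induction_on with
      | _ n ih =>
        intro p hp
        by_cases hp0 : p = 0
        · simp [hp0]
        set d := p.natDegree with hd
        by_cases hdS : ∀ r ∈ M, r ≠ 0 → r.natDegree ≠ d
        · -- X^d ∈ WK
          have hXd : (X : F[X]) ^ d ∈ WK u v :=
            Submodule.subset_span ⟨d, rfl, hdS⟩
          have hterm : Polynomial.C p.leadingCoeff * X ^ d ∈ WK u v := by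
            have := (WK u v).smul_mem p.leadingCoeff hXd
            simpa [Polynomial.smul_eq_C_mul] using this
          set r := p - Polynomial.C p.leadingCoeff * X ^ d with hr
          have h1 : p.coeff d = p.leadingCoeff := by
            rw [hd, Polynomial.coeff_natDegree]
          have hcr : r.coeff d = 0 := by
            simp [hr, Polynomial.coeff_sub, Polynomial.coeff_C_mul,
              Polynomial.coeff_X_pow, h1]
          have hrle : r.natDegree ≤ d := by
            refine (Polynomial.natDegree_sub_le_iff_left ?_).mpr le_rfl
            calc (Polynomial.C p.leadingCoeff * X ^ d).natDegree
                ≤ (X ^ d : F[X]).natDegree := Polynomial.natDegree_C_mul_le _ _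
              _ = d := Polynomial.natDegree_X_pow d
          have hrmem : r ∈ M ⊔ WK u v := by
            by_cases hr0 : r = 0
            · simp [hr0]
            · have : r.natDegree < d := lt_of_le_of_ne hrle
                (fun h => Polynomial.mem_support_iff.mp
                  (h ▸ r.natDegree_mem_support_of_nonzero hr0) hcr)
              exact ih d (hd ▸ hp) r this
          have : p = r + Polynomial.C p.leadingCoeff * X ^ d := by ring
          rw [this]
          exact Submodule.add_mem _ hrmem (Submodule.mem_sup_right hterm)
        · push_neg at hdS
          obtain ⟨m, hmM, hm0, hmd⟩ := hdS
          have hlcm : m.leadingCoeff ≠ 0 := Polynomial.leadingCoeff_ne_zero.mpr hm0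
          set c := p.leadingCoeff / m.leadingCoeff with hc
          have hterm : Polynomial.C c * m ∈ M := by
            have := M.smul_mem c hmM
            simpa [Polynomial.smul_eq_C_mul] using this
          set r := p - Polynomial.C c * m with hr
          have h1 : p.coeff d = p.leadingCoeff := by
            rw [hd, Polynomial.coeff_natDegree]
          have h2 : m.coeff d = m.leadingCoeff := by
            rw [← hmd, Polynomial.coeff_natDegree]
          have hcr : r.coeff d = 0 := by
            simp [hr, Polynomial.coeff_sub, Polynomial.coeff_C_mul, h1, h2, hc,
              div_mul_cancel₀ _ hlcm]
          have hrle : r.natDegree ≤ d := by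
            refine (Polynomial.natDegree_sub_le_iff_left ?_).mpr le_rfl
            calc (Polynomial.C c * m).natDegree ≤ m.natDegree :=
                  Polynomial.natDegree_C_mul_le c m
              _ = d := hmd
          have hrmem : r ∈ M ⊔ WK u v := by
            by_cases hr0 : r = 0
            · simp [hr0]
            · have : r.natDegree < d := lt_of_le_of_ne hrle
                (fun h => Polynomial.mem_support_iff.mp
                  (h ▸ r.natDegree_mem_support_of_nonzero hr0) hcr)
              exact ih d (hd ▸ hp) r this
          have : p = r + Polynomial.C c * m := by ring
          rw [this]
          exact Submodule.add_mem _ hrmem (Submodule.mem_sup_left hterm)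
    intro p _
    exact key (p.natDegree + 1) p (Nat.lt_succ_self _)
end

section
/- The dimension of the standard complement W_K over F is at most max{deg(u), deg(v)} − [deg(v − u) ≤ deg(u) − 1], where [·] is 1 if the condition holds and 0 otherwise. In particular, W_K is finite-dimensional. -/
open Polynomial

/-!
Let `m = max (deg u) (deg v)`. If the coefficients of `X ^ m` in `u` and `v` differ, then
`φ_K (X ^ d)` has degree exactly `m + d`, so every degree `≥ m` is attained in `im φ_K` and
`W_K ⊆ F[X]_{<m}`.

Otherwise `deg φ_K p < m + deg p`, and the coefficient of `X ^ (m + d)` in `φ_K (X ^ (d + 1))` is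
`c (d + 1) + e` with `c = lc u ≠ 0`; in characteristic zero it vanishes for at most one `d`, so all
degrees `≥ m + D` are attained and `W_K ⊆ F[X]_{<m+D}` for some `D`. Shift-reducedness makes
`φ_K` injective: a kernel element `p` factors as `σ⁻¹ v · p'` with `p'` in the kernel of the map
for `σ⁻¹ v`, and `deg p' < deg p`. Hence `φ_K` embeds the `(D + 1)`-dimensional space
`F[X]_{≤D}` into `im φ_K ∩ F[X]_{<m+D}`, which meets `W_K` trivially, leaving at most `m - 1`
dimensions for `W_K`. (For `m = 0` this fails, but then `e = 0` and every degree is attained.)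
-/

open Module

namespace Polynomial

theorem coeff_taylor_of_natDegree_le {R : Type*} [CommRing R] {p : R[X]} {d : ℕ} (r : R)
    (hp : p.natDegree ≤ d) : (taylor r p).coeff d = p.coeff d := by
  rcases hp.lt_or_eq with hlt | rfl
  · rw [coeff_eq_zero_of_natDegree_lt hlt,
      coeff_eq_zero_of_natDegree_lt ((natDegree_taylor p r).trans_lt hlt)]
  · exact coeff_taylor_natDegree (f := p) (r := r)

section Field

variable {F : Type*} [Field F]

theorem finrank_degreeLT (N : ℕ) : finrank F (degreeLT F N) = N := by
  rw [finrank_eq_card_basis (degreeLT.basis F N), Fintype.card_fin]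

theorem finrank_le_of_le_degreeLT {S : Submodule F F[X]} {N : ℕ} (h : S ≤ degreeLT F N) :
    finrank F S ≤ N :=
  (Submodule.finrank_mono h).trans_eq (finrank_degreeLT N)

noncomputable def degreeComplement (S : Submodule F F[X]) : Submodule F F[X] :=
  Submodule.span F {q | ∃ ℓ : ℕ, q = X ^ ℓ ∧ ∀ r ∈ S, r ≠ 0 → r.natDegree ≠ ℓ}

theorem coeff_natDegree_eq_zero_of_mem_degreeComplement {S : Submodule F F[X]} {p r : F[X]}
    (hp : p ∈ degreeComplement S) (hr : r ∈ S) (hr0 : r ≠ 0) : p.coeff r.natDegree = 0 := by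
  induction hp using Submodule.span_induction with
  | mem q hq =>
    obtain ⟨ℓ, rfl, hℓ⟩ := hq
    rw [coeff_X_pow, if_neg (hℓ r hr hr0)]
  | zero => rw [coeff_zero]
  | add p q _ _ hp hq => rw [coeff_add, hp, hq, add_zero]
  | smul a p _ hp => rw [coeff_smul, hp, smul_zero]

theorem disjoint_degreeComplement (S : Submodule F F[X]) : Disjoint (degreeComplement S) S := by
  refine Submodule.disjoint_def.2 fun p hpC hpS => ?_
  by_contra hp0
  exact hp0 (leadingCoeff_eq_zero.1 (coeff_natDegree_eq_zero_of_mem_degreeComplement hpC hpS hp0))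

theorem degreeComplement_le_degreeLT {S : Submodule F F[X]} {N : ℕ}
    (h : ∀ ℓ, N ≤ ℓ → ∃ r ∈ S, r ≠ 0 ∧ r.natDegree = ℓ) : degreeComplement S ≤ degreeLT F N := by
  intro p hp
  rw [mem_degreeLT, degree_lt_iff_coeff_zero]
  intro ℓ hℓ
  obtain ⟨r, hr, hr0, rfl⟩ := h ℓ hℓ
  exact coeff_natDegree_eq_zero_of_mem_degreeComplement hp hr hr0

theorem finrank_degreeComplement_add_le {S T : Submodule F F[X]} {N : ℕ} (hTS : T ≤ S)
    (hT : T ≤ degreeLT F N) (hC : degreeComplement S ≤ degreeLT F N) :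
    finrank F (degreeComplement S) + finrank F T ≤ N := by
  have := Submodule.finiteDimensional_of_le hC
  have := Submodule.finiteDimensional_of_le hT
  rw [← Submodule.finrank_sup_add_finrank_inf_eq,
    ((disjoint_degreeComplement S).mono_right hTS).eq_bot, finrank_bot, add_zero]
  exact finrank_le_of_le_degreeLT (sup_le hC hT)

end Field

section Ring

variable {R : Type*} [Ring R] {u v : R[X]}

theorem coeff_max_natDegree_ne_zero_of_coeff_eq (hu : u ≠ 0)
    (h : u.coeff (max u.natDegree v.natDegree) = v.coeff (max u.natDegree v.natDegree)) :
    u.coeff (max u.natDegree v.natDegree) ≠ 0 := by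
  intro h0
  have hlt : u.natDegree < max u.natDegree v.natDegree :=
    (le_max_left _ _).lt_of_ne fun he => leadingCoeff_ne_zero.2 hu (by rwa [← he] at h0)
  have hvm : v.natDegree = max u.natDegree v.natDegree := by omega
  have hv0 : v = 0 := leadingCoeff_eq_zero.1 (by rw [leadingCoeff, hvm, ← h, h0])
  rw [hv0, natDegree_zero] at hlt
  omega

theorem degree_sub_lt_iff_coeff_max_natDegree :
    (v - u).degree < u.degree ↔
      u.coeff (max u.natDegree v.natDegree) = v.coeff (max u.natDegree v.natDegree) ∧
        u.coeff (max u.natDegree v.natDegree) ≠ 0 := by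
  constructor
  · intro h
    have hu : u ≠ 0 := fun hu => by simp [hu] at h
    have hdeg : v.degree = u.degree := by
      simpa using degree_add_eq_left_of_degree_lt h
    rw [max_eq_left (natDegree_le_natDegree hdeg.le)]
    refine ⟨?_, leadingCoeff_ne_zero.2 hu⟩
    have := coeff_eq_zero_of_degree_lt (h.trans_eq (degree_eq_natDegree hu))
    rw [coeff_sub, sub_eq_zero] at this
    exact this.symm
  · generalize hm : max u.natDegree v.natDegree = m
    rintro ⟨hc, hc0⟩
    have hu : u.natDegree = m := (hm ▸ le_max_left _ _).antisymm (le_natDegree_of_ne_zero hc0)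
    have hv : v.natDegree = m :=
      (hm ▸ le_max_right _ _).antisymm (le_natDegree_of_ne_zero (hc ▸ hc0))
    have hu0 : u ≠ 0 := fun h0 => hc0 (by rw [h0, coeff_zero])
    have hv0 : v ≠ 0 := fun h0 => hc0 (by rw [hc, h0, coeff_zero])
    refine degree_sub_lt_right ?_ hu0 ?_
    · rw [degree_eq_natDegree hu0, degree_eq_natDegree hv0, hu, hv]
    · rw [leadingCoeff, leadingCoeff, hu, hv, hc]

end Ring

end Polynomial

theorem exists_forall_ge_mul_add_ne_zero {K : Type*} [Field K] [CharZero K] {c : K} (hc : c ≠ 0)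
    (e : K) : ∃ D : ℕ, ∀ d ≥ D, c * (d + 1) + e ≠ 0 := by
  by_cases h : ∃ d₀ : ℕ, c * (d₀ + 1) + e = 0
  · obtain ⟨d₀, hd₀⟩ := h
    refine ⟨d₀ + 1, fun d hd hd' => ?_⟩
    have : (d : K) = d₀ := by
      simpa using mul_left_cancel₀ hc (show c * (d + 1) = c * (d₀ + 1) by
        linear_combination hd' - hd₀)
    have := Nat.cast_injective this
    omega
  · exact ⟨0, fun d _ => not_exists.1 h d⟩

section Reduction

variable {F : Type*} [Field F] {u v : F[X]} {m : ℕ}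

theorem WK_eq_degreeComplement (u v : F[X]) :
    WK u v = degreeComplement (LinearMap.range (phiK u v)) := rfl

theorem phiK_apply (u v p : F[X]) : phiK u v p = u * taylor 1 p - v * p := by
  rw [taylor_apply]; rfl

theorem natDegree_phiK_le (hu : u.natDegree ≤ m) (hv : v.natDegree ≤ m) {p : F[X]} {d : ℕ}
    (hp : p.natDegree ≤ d) : (phiK u v p).natDegree ≤ m + d := by
  rw [phiK_apply]
  refine (natDegree_sub_le _ _).trans (max_le ?_ ?_)
  · exact natDegree_mul_le.trans (add_le_add hu ((natDegree_taylor p 1).trans_le hp))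
  · exact natDegree_mul_le.trans (add_le_add hv hp)

theorem coeff_phiK_add (hu : u.natDegree ≤ m) (hv : v.natDegree ≤ m) {p : F[X]} {d : ℕ}
    (hp : p.natDegree ≤ d) :
    (phiK u v p).coeff (m + d) = (u.coeff m - v.coeff m) * p.coeff d := by
  rw [phiK_apply, coeff_sub,
    coeff_mul_add_eq_of_natDegree_le hu ((natDegree_taylor p 1).trans_le hp),
    coeff_mul_add_eq_of_natDegree_le hv hp, coeff_taylor_of_natDegree_le 1 hp, sub_mul]

theorem phiK_mem_degreeLT (hu : u.natDegree ≤ m) (hv : v.natDegree ≤ m)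
    (hc : u.coeff m = v.coeff m) {p : F[X]} {d : ℕ} (hp : p ∈ degreeLT F (d + 1)) :
    phiK u v p ∈ degreeLT F (m + d) := by
  rw [degreeLT_succ_eq_degreeLE, mem_degreeLE, ← natDegree_le_iff_degree_le] at hp
  rw [mem_degreeLT, degree_lt_iff_coeff_zero]
  intro n hn
  rcases hn.eq_or_lt with rfl | hlt
  · rw [coeff_phiK_add hu hv hp, hc, sub_self, zero_mul]
  · exact coeff_eq_zero_of_natDegree_lt ((natDegree_phiK_le hu hv hp).trans_lt hlt)

theorem coeff_phiK_X_pow_succ (hu : u.natDegree ≤ m) (d : ℕ) :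
    (phiK u v (X ^ (d + 1))).coeff (m + d) = u.coeff m * (d + 1) + ((u - v) * X).coeff m := by
  have hsplit : phiK u v (X ^ (d + 1)) =
      u * ((X + 1) ^ (d + 1) - X ^ (d + 1)) + (u - v) * X * X ^ d := by
    rw [phiK_apply, taylor_X_pow, C_1]; ring
  have hdeg : ((X + 1) ^ (d + 1) - X ^ (d + 1) : F[X]).natDegree ≤ d := by
    rw [natDegree_le_iff_coeff_eq_zero]
    intro n hn
    rcases (Nat.succ_le_of_lt hn).eq_or_lt with rfl | hlt
    · simp [coeff_X_add_one_pow]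
    · simp [coeff_X_add_one_pow, Nat.choose_eq_zero_of_lt hlt, hlt.ne']
  have htop : ((X + 1) ^ (d + 1) - X ^ (d + 1) : F[X]).coeff d = d + 1 := by
    simp [coeff_X_add_one_pow]
  rw [hsplit, coeff_add, coeff_mul_add_eq_of_natDegree_le hu hdeg, htop, coeff_mul_X_pow]

theorem exists_mem_range_phiK_natDegree_eq (hu : u.natDegree ≤ m) (hv : v.natDegree ≤ m)
    (hc : u.coeff m = v.coeff m) {d : ℕ}
    (h : u.coeff m * (d + 1) + ((u - v) * X).coeff m ≠ 0) :
    ∃ r ∈ LinearMap.range (phiK u v), r ≠ 0 ∧ r.natDegree = m + d := by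
  rw [← coeff_phiK_X_pow_succ hu d] at h
  have hmem := phiK_mem_degreeLT hu hv hc (p := X ^ (d + 1)) (d := d + 1)
    (mem_degreeLT.2 (by rw [degree_X_pow]; exact_mod_cast Nat.lt_succ_self _))
  rw [← add_assoc, degreeLT_succ_eq_degreeLE, mem_degreeLE, ← natDegree_le_iff_degree_le]
    at hmem
  exact ⟨_, LinearMap.mem_range_self _ _, fun h0 => h (by rw [h0, coeff_zero]),
    natDegree_eq_of_le_of_coeff_ne_zero hmem h⟩

theorem eq_zero_of_mul_taylor_eq_mul {p : F[X]} (hv : 0 < v.natDegree)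
    (hsr : ∀ n : ℕ, IsCoprime u (taylor (-(n : F)) v)) (h : u * taylor 1 p = v * p) :
    p = 0 := by
  induction hN : p.natDegree using Nat.strong_induction_on generalizing p v with
  | _ N ih =>
  have hv0 : v ≠ 0 := ne_zero_of_natDegree_gt hv
  obtain ⟨w, hw⟩ : v ∣ taylor 1 p := by
    refine (IsCoprime.symm ?_).dvd_of_dvd_mul_left ⟨p, h⟩
    simpa using hsr 0
  set v' := taylor (-1) v
  set p' := taylor (-1) w
  have hp : p = v' * p' := by
    rw [← taylor_mul, ← hw, taylor_taylor, neg_add_cancel, taylor_zero]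
  have h' : u * taylor 1 p' = v' * p' := by
    refine mul_left_cancel₀ hv0 ?_
    calc v * (u * taylor 1 p') = u * (v * w) := by
          rw [taylor_taylor, add_neg_cancel, taylor_zero]; ring
      _ = v * (v' * p') := by rw [← hw, h, hp]
  have hsr' : ∀ n : ℕ, IsCoprime u (taylor (-(n : F)) v') := fun n => by
    rw [taylor_taylor, show -(n : F) + -1 = -((n + 1 : ℕ) : F) by push_cast; ring]
    exact hsr (n + 1)
  suffices p' = 0 by rw [hp, this, mul_zero]
  by_contra hp'
  have hlt : p'.natDegree < N := by
    rw [← hN, hp, natDegree_mul (mt (taylor_eq_zero _ _).1 hv0) hp']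
    simp only [p', natDegree_taylor]
    omega
  exact hp' (ih _ hlt (by rwa [natDegree_taylor]) hsr' h' rfl)

theorem phiK_injective (hv : 0 < v.natDegree)
    (hsr : ∀ n : ℕ, IsCoprime u (taylor (-(n : F)) v)) : Function.Injective (phiK u v) :=
  (injective_iff_map_eq_zero _).2 fun p hp =>
    eq_zero_of_mul_taylor_eq_mul hv hsr (sub_eq_zero.1 (by rwa [phiK_apply] at hp))

theorem WK_le_degreeLT_of_coeff_ne (hu : u.natDegree ≤ m) (hv : v.natDegree ≤ m)
    (hc : u.coeff m ≠ v.coeff m) : WK u v ≤ degreeLT F m := by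
  refine degreeComplement_le_degreeLT fun ℓ hℓ => ?_
  obtain ⟨d, rfl⟩ := Nat.exists_eq_add_of_le hℓ
  have hcoeff : (phiK u v (X ^ d)).coeff (m + d) ≠ 0 := by
    rw [coeff_phiK_add hu hv (natDegree_X_pow d).le, coeff_X_pow_self, mul_one]
    exact sub_ne_zero.2 hc
  exact ⟨_, LinearMap.mem_range_self _ _, fun h0 => hcoeff (by rw [h0, coeff_zero]),
    natDegree_eq_of_le_of_coeff_ne_zero (natDegree_phiK_le hu hv (natDegree_X_pow d).le) hcoeff⟩

theorem finrank_WK_le_of_coeff_eq [CharZero F] (hu : u.natDegree ≤ m) (hv : v.natDegree ≤ m)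
    (hc : u.coeff m = v.coeff m) (hc0 : u.coeff m ≠ 0)
    (hsr : ∀ n : ℕ, IsCoprime u (taylor (-(n : F)) v)) :
    FiniteDimensional F (WK u v) ∧ finrank F (WK u v) ≤ m - 1 := by
  rcases Nat.eq_zero_or_pos m with rfl | hm
  · have hle : WK u v ≤ degreeLT F 0 := degreeComplement_le_degreeLT fun d _ => by
      simpa using exists_mem_range_phiK_natDegree_eq hu hv hc (d := d)
        (by rw [coeff_mul_X_zero, add_zero]; exact mul_ne_zero hc0 (Nat.cast_add_one_ne_zero d))
    exact ⟨Submodule.finiteDimensional_of_le hle, finrank_le_of_le_degreeLT hle⟩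
  obtain ⟨D, hD⟩ := exists_forall_ge_mul_add_ne_zero hc0 (((u - v) * X).coeff m)
  have hle : WK u v ≤ degreeLT F (m + D) := degreeComplement_le_degreeLT fun ℓ hℓ => by
    obtain ⟨d, rfl⟩ := Nat.exists_eq_add_of_le hℓ
    rw [add_assoc]
    exact exists_mem_range_phiK_natDegree_eq hu hv hc (hD _ (Nat.le_add_right D d))
  have hinj : Function.Injective (phiK u v) :=
    phiK_injective (hm.trans_le (le_natDegree_of_ne_zero (hc ▸ hc0))) hsr
  have hT : finrank F ((degreeLT F (D + 1)).map (phiK u v)) = D + 1 :=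
    (Submodule.equivMapOfInjective _ hinj _).finrank_eq.symm.trans (finrank_degreeLT _)
  have hsum := finrank_degreeComplement_add_le LinearMap.map_le_range
    (Submodule.map_le_iff_le_comap.2 fun p hp => phiK_mem_degreeLT hu hv hc hp) hle
  exact ⟨Submodule.finiteDimensional_of_le hle, by rw [WK_eq_degreeComplement]; omega⟩

end Reduction

open Classical in
theorem dim_WK_le_general
    (F : Type*) [Field F] [CharZero F] (u v : F[X])
    (hu : u ≠ 0)
    (hsr : ∀ k : ℤ, IsCoprime u (v.comp (X + Polynomial.C (k : F)))) :
    FiniteDimensional F (WK u v) ∧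
    Module.finrank F (WK u v) ≤
      max u.natDegree v.natDegree - (if (v - u).degree < u.degree then 1 else 0) := by
  have hum : u.natDegree ≤ max u.natDegree v.natDegree := le_max_left _ _
  have hvm : v.natDegree ≤ max u.natDegree v.natDegree := le_max_right _ _
  split_ifs with hcase
  · obtain ⟨hc, hc0⟩ := degree_sub_lt_iff_coeff_max_natDegree.1 hcase
    refine finrank_WK_le_of_coeff_eq hum hvm hc hc0 fun n => ?_
    simpa [taylor_apply] using hsr (-n)
  · have hc := mt (fun hc => degree_sub_lt_iff_coeff_max_natDegree.2
      ⟨hc, coeff_max_natDegree_ne_zero_of_coeff_eq hu hc⟩) hcase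
    have hle := WK_le_degreeLT_of_coeff_ne hum hvm hc
    exact ⟨Submodule.finiteDimensional_of_le hle, finrank_le_of_le_degreeLT hle⟩

open Classical in
/-- `W_K` is finite-dimensional of dimension at most
`max(deg u, deg v) − [deg(v−u) ≤ deg(u) − 1]`. -/
theorem dim_WK_le
    (F : Type*) [Field F] [CharZero F] (u v : F[X])
    (hu : u ≠ 0) (hv : v ≠ 0) (huv : IsCoprime u v)
    (hsr : ∀ k : ℤ, IsCoprime u (v.comp (X + Polynomial.C (k : F)))) :
    FiniteDimensional F (WK u v) ∧
    Module.finrank F (WK u v) ≤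
      max u.natDegree v.natDegree - (if (v - u).degree < u.degree then 1 else 0) :=
  dim_WK_le_general F u v hu hsr
end
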